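/- (Proposition 4.2(iii), pointwise form.) Let c > 0, η, τ ∈ ℝ, and let ν ∈ ℝ³ be a unit vector. Let C : ℂ⁴ → ℂ⁴ be the antilinear map C v := i β α₂ v̄, where v̄ denotes entrywise complex conjugation. Then for all u, v ∈ ℂ⁴ the pair (u, v) satisfies the (η,τ)-jump condition if and only if the pair (C u, C v) satisfies the (−η, τ)-jump condition. -/
import Mathlib


open Matrix

noncomputable section

/-- The Pauli matrices. -/
def pauli : Fin 3 → Matrix (Fin 2) (Fin 2) ℂ
  | 0 => !![0, 1; 1, 0]
  | 1 => !![0, -Complex.I; Complex.I, 0]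
  | 2 => !![1, 0; 0, -1]

/-- The Dirac matrices α₁, α₂, α₃. -/
def diracAlpha (j : Fin 3) : Matrix (Fin 4) (Fin 4) ℂ :=
  Matrix.reindex finSumFinEquiv finSumFinEquiv (Matrix.fromBlocks 0 (pauli j) (pauli j) 0)

/-- The Dirac matrix β. -/
def diracBeta : Matrix (Fin 4) (Fin 4) ℂ :=
  Matrix.reindex finSumFinEquiv finSumFinEquiv ((Matrix.fromBlocks 1 0 0 (-1) : Matrix (Fin 2 ⊕ Fin 2) (Fin 2 ⊕ Fin 2) ℂ))

/-- The matrix γ₅. -/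
def gammaFive : Matrix (Fin 4) (Fin 4) ℂ :=
  Matrix.reindex finSumFinEquiv finSumFinEquiv ((Matrix.fromBlocks 0 1 1 0 : Matrix (Fin 2 ⊕ Fin 2) (Fin 2 ⊕ Fin 2) ℂ))

/-- α·x for x ∈ ℝ³. -/
def alphaDot (x : EuclideanSpace ℝ (Fin 3)) : Matrix (Fin 4) (Fin 4) ℂ :=
  ∑ j : Fin 3, (x j : ℂ) • diracAlpha j

/-- The (η,τ)-jump condition. -/
def JumpCond (c η τ : ℝ) (ν : EuclideanSpace ℝ (Fin 3)) (u v : Fin 4 → ℂ) : Prop :=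
  (Complex.I * (c : ℂ)) • ((alphaDot ν) *ᵥ (u - v)) +
    ((1 : ℂ) / 2) • ((((η : ℂ) • (1 : Matrix (Fin 4) (Fin 4) ℂ) + (τ : ℂ) • diracBeta)) *ᵥ (u + v)) = 0

/-- The (antilinear) charge conjugation operator C v = i β α₂ v̄. -/
def chargeConj (v : Fin 4 → ℂ) : Fin 4 → ℂ :=
  Complex.I • ((diracBeta * diracAlpha 1) *ᵥ (fun k => (starRingEnd ℂ) (v k)))


lemma e0' : finSumFinEquiv.symm (0:Fin 4) = (Sum.inl (0:Fin 2) : Fin 2 ⊕ Fin 2) := rfl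
lemma e1' : finSumFinEquiv.symm (1:Fin 4) = (Sum.inl (1:Fin 2) : Fin 2 ⊕ Fin 2) := rfl
lemma e2' : finSumFinEquiv.symm (2:Fin 4) = (Sum.inr (0:Fin 2) : Fin 2 ⊕ Fin 2) := rfl
lemma e3' : finSumFinEquiv.symm (3:Fin 4) = (Sum.inr (1:Fin 2) : Fin 2 ⊕ Fin 2) := rfl

lemma dA0 : diracAlpha 0 = !![0,0,0,1; 0,0,1,0; 0,1,0,0; 1,0,0,0] := by
  ext i j
  fin_cases i <;> fin_cases j <;> first
    | rfl
    | simp [diracAlpha, pauli, Matrix.fromBlocks, e0', e1', e2', e3', Matrix.vecHead, Matrix.vecTail, Function.comp]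
lemma dA1 : diracAlpha 1 = !![0,0,0,-Complex.I; 0,0,Complex.I,0; 0,-Complex.I,0,0; Complex.I,0,0,0] := by
  ext i j
  fin_cases i <;> fin_cases j <;> first
    | rfl
    | simp [diracAlpha, pauli, Matrix.fromBlocks, e0', e1', e2', e3', Matrix.vecHead, Matrix.vecTail, Function.comp]
lemma dA2 : diracAlpha 2 = !![0,0,1,0; 0,0,0,-1; 1,0,0,0; 0,-1,0,0] := by
  ext i j
  fin_cases i <;> fin_cases j <;> first
    | rfl
    | simp [diracAlpha, pauli, Matrix.fromBlocks, e0', e1', e2', e3', Matrix.vecHead, Matrix.vecTail, Function.comp]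
lemma dB : diracBeta = !![1,0,0,0; 0,1,0,0; 0,0,-1,0; 0,0,0,-1] := by
  ext i j
  fin_cases i <;> fin_cases j <;> first
    | rfl
    | simp [diracBeta, Matrix.fromBlocks, Matrix.one_apply, e0', e1', e2', e3', Matrix.vecHead, Matrix.vecTail, Function.comp]

lemma dM : diracBeta * diracAlpha 1 =
    !![0,0,0,-Complex.I; 0,0,Complex.I,0; 0,Complex.I,0,0; -Complex.I,0,0,0] := by
  rw [dB, dA1]
  ext i j
  fin_cases i <;> fin_cases j <;>
    simp [Matrix.mul_apply, Fin.sum_univ_four, Matrix.vecHead, Matrix.vecTail]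

lemma hAD (ν : EuclideanSpace ℝ (Fin 3)) : alphaDot ν =
    !![0, 0, (ν 2 : ℂ), (ν 0 : ℂ) - Complex.I * (ν 1 : ℂ);
       0, 0, (ν 0 : ℂ) + Complex.I * (ν 1 : ℂ), -(ν 2 : ℂ);
       (ν 2 : ℂ), (ν 0 : ℂ) - Complex.I * (ν 1 : ℂ), 0, 0;
       (ν 0 : ℂ) + Complex.I * (ν 1 : ℂ), -(ν 2 : ℂ), 0, 0] := by
  unfold alphaDot
  rw [Fin.sum_univ_three, dA0, dA1, dA2]
  ext i j
  fin_cases i <;> fin_cases j <;>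
    simp [Matrix.vecHead, Matrix.vecTail] <;> ring

lemma hEB (η τ : ℝ) : (η : ℂ) • (1 : Matrix (Fin 4) (Fin 4) ℂ) + (τ : ℂ) • diracBeta =
    !![(η : ℂ) + τ, 0, 0, 0; 0, (η : ℂ) + τ, 0, 0;
       0, 0, (η : ℂ) - τ, 0; 0, 0, 0, (η : ℂ) - τ] := by
  rw [dB]
  ext i j
  fin_cases i <;> fin_cases j <;>
    simp [Matrix.one_apply, Matrix.vecHead, Matrix.vecTail] <;> ring

def jumpExpr (c η τ : ℝ) (ν : EuclideanSpace ℝ (Fin 3)) (u v : Fin 4 → ℂ) : Fin 4 → ℂ :=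
  (Complex.I * (c : ℂ)) • ((alphaDot ν) *ᵥ (u - v)) +
    ((1 : ℂ) / 2) • ((((η : ℂ) • (1 : Matrix (Fin 4) (Fin 4) ℂ) + (τ : ℂ) • diracBeta)) *ᵥ (u + v))

set_option maxHeartbeats 1600000 in
lemma key (c η τ : ℝ) (ν : EuclideanSpace ℝ (Fin 3)) (u v : Fin 4 → ℂ) :
    jumpExpr c (-η) τ ν (chargeConj u) (chargeConj v) = - chargeConj (jumpExpr c η τ ν u v) := by
  have h1 := hAD ν
  have h2 := hEB η τ
  have h3 := hEB (-η) τ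
  funext k
  fin_cases k <;>
  · simp only [jumpExpr, chargeConj, h1, h2, h3, dM, Matrix.mulVec, dotProduct,
      Fin.sum_univ_four, Pi.add_apply, Pi.sub_apply, Pi.smul_apply, Pi.neg_apply,
      smul_eq_mul]
    simp [Complex.conj_ofReal, Matrix.vecHead, Matrix.vecTail, Complex.ext_iff]
    ring_nf
    exact ⟨trivial, trivial⟩

lemma chargeConj_zero : chargeConj 0 = 0 := by
  funext k
  simp [chargeConj, Matrix.mulVec, dotProduct]

lemma chargeConj_eq_zero (w : Fin 4 → ℂ) (h : chargeConj w = 0) : w = 0 := by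
  have h0 := congrFun h 0
  have h1 := congrFun h 1
  have h2 := congrFun h 2
  have h3 := congrFun h 3
  simp [chargeConj, dM, Matrix.mulVec, dotProduct, Fin.sum_univ_four] at h0 h1 h2 h3
  funext k
  fin_cases k <;> simp_all

theorem jump_condition_chargeConj (c η τ : ℝ) (hc : 0 < c)
    (ν : EuclideanSpace ℝ (Fin 3)) (hν : ‖ν‖ = 1) :
    ∀ u v : Fin 4 → ℂ, JumpCond c η τ ν u v ↔
      JumpCond c (-η) τ ν (chargeConj u) (chargeConj v) := by
  intro u v
  show jumpExpr c η τ ν u v = 0 ↔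
    jumpExpr c (-η) τ ν (chargeConj u) (chargeConj v) = 0
  rw [key]
  constructor
  · intro h
    rw [h, chargeConj_zero, neg_zero]
  · intro h
    exact chargeConj_eq_zero _ (neg_eq_zero.mp h)

end
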